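/- arXiv:2312.11425 — 7 statements merged into one kernel-verified Lean document; each statement's English description precedes it below -/
import Mathlib

section
/- The subdifferential sign vector of LASSO minimisers is constant: if x¹ and x² are both minimisers of ‖Ax − y‖₂² + λ‖x‖₁ and x¹ᵢ > 0 for some index i, then x²ᵢ ≥ 0; similarly if x¹ᵢ < 0 then x²ᵢ ≤ 0. -/
open Matrix BigOperators

noncomputable def lassoObj {m N : ℕ} (lam : ℝ) (y : Fin m → ℝ)
    (A : Matrix (Fin m) (Fin N) ℝ) (x : Fin N → ℝ) : ℝ :=
  (∑ i, (A.mulVec x i - y i) ^ 2) + lam * ∑ j, |x j|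

def lassoSol {m N : ℕ} (lam : ℝ) (y : Fin m → ℝ)
    (A : Matrix (Fin m) (Fin N) ℝ) : Set (Fin N → ℝ) :=
  {x | ∀ z, lassoObj lam y A x ≤ lassoObj lam y A z}

/-- The sign pattern of LASSO minimisers is consistent: if one minimiser is positive
(resp. negative) at an index, any minimiser is nonnegative (resp. nonpositive) there. -/
theorem lasso_sign_consistent {m N : ℕ} (lam : ℝ) (hlam : 0 < lam)
    (y : Fin m → ℝ) (A : Matrix (Fin m) (Fin N) ℝ)
    (x1 x2 : Fin N → ℝ) (hx1 : x1 ∈ lassoSol lam y A) (hx2 : x2 ∈ lassoSol lam y A)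
    (i : Fin N) :
    (0 < x1 i → 0 ≤ x2 i) ∧ (x1 i < 0 → x2 i ≤ 0) := by
  have key : |x1 i + x2 i| = |x1 i| + |x2 i| := by
    set z : Fin N → ℝ := fun j => (x1 j + x2 j) / 2 with hzdef
    have hmul : ∀ k, A.mulVec z k = (A.mulVec x1 k + A.mulVec x2 k) / 2 := by
      intro k
      simp only [mulVec, dotProduct, hzdef]
      rw [show (∑ x : Fin N, A k x * ((x1 x + x2 x) / 2))
            = ∑ x : Fin N, (A k x * x1 x + A k x * x2 x) / 2 from
          Finset.sum_congr rfl fun j _ => by ring,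
        ← Finset.sum_div, Finset.sum_add_distrib]
    have h12 : lassoObj lam y A x1 = lassoObj lam y A x2 :=
      le_antisymm (hx1 x2) (hx2 x1)
    have hz1 : lassoObj lam y A x1 ≤ lassoObj lam y A z := hx1 z
    set q : Fin m → ℝ := fun k =>
      ((A.mulVec x1 k - y k) ^ 2 + (A.mulVec x2 k - y k) ^ 2) / 2
        - (A.mulVec z k - y k) ^ 2 with hqdef
    set r : Fin N → ℝ := fun j => (|x1 j| + |x2 j|) / 2 - |z j| with hrdef
    have hq : ∀ k, 0 ≤ q k := by
      intro k
      simp only [hqdef, hmul k]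
      nlinarith [sq_nonneg (A.mulVec x1 k - A.mulVec x2 k)]
    have hr : ∀ j, 0 ≤ r j := by
      intro j
      have h1 : |z j| ≤ (|x1 j| + |x2 j|) / 2 := by
        have := abs_add_le (x1 j) (x2 j)
        have h2 : |z j| = |x1 j + x2 j| / 2 := by
          rw [hzdef]
          simp [abs_div]
        linarith
      simp only [hrdef]
      linarith
    have hO : (∑ k, q k) + lam * (∑ j, r j) =
        (lassoObj lam y A x1 + lassoObj lam y A x2) / 2 - lassoObj lam y A z := by
      simp only [lassoObj, hqdef, hrdef, Finset.sum_sub_distrib]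
      rw [← Finset.sum_div (s := Finset.univ) (f := fun k => (A.mulVec x1 k - y k) ^ 2 + (A.mulVec x2 k - y k) ^ 2),
        Finset.sum_add_distrib,
        ← Finset.sum_div (s := Finset.univ) (f := fun j => |x1 j| + |x2 j|),
        Finset.sum_add_distrib]
      ring
    have hsum : (∑ k, q k) + lam * (∑ j, r j) ≤ 0 := by
      rw [hO]; linarith
    have hqsum : 0 ≤ ∑ k, q k := Finset.sum_nonneg fun k _ => hq k
    have hrsum : 0 ≤ ∑ j, r j := Finset.sum_nonneg fun j _ => hr j
    have hrsum0 : ∑ j, r j = 0 := by nlinarith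
    have hri : r i = 0 :=
      (Finset.sum_eq_zero_iff_of_nonneg fun j _ => hr j).mp hrsum0 i (Finset.mem_univ i)
    have hzi : |z i| = |x1 i + x2 i| / 2 := by
      rw [hzdef]; simp [abs_div]
    simp only [hrdef, hzi] at hri
    linarith
  constructor
  · intro h1
    by_contra h2
    push_neg at h2
    rw [abs_of_pos h1, abs_of_neg h2] at key
    rcases abs_cases (x1 i + x2 i) with ⟨h, _⟩ | ⟨h, _⟩ <;> linarith
  · intro h1
    by_contra h2
    push_neg at h2
    rw [abs_of_neg h1, abs_of_pos h2] at key
    rcases abs_cases (x1 i + x2 i) with ⟨h, _⟩ | ⟨h, _⟩ <;> linarith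
end

section
/- If the unconstrained LASSO solution set contains more than one point, then it contains at least two distinct solutions with minimal support, i.e. at least two solutions x such that any solution x' with supp(x') ⊆ supp(x) equals x. -/
open Matrix BigOperators

def MinimalSupportSol {m N : ℕ} (lam : ℝ) (y : Fin m → ℝ)
    (A : Matrix (Fin m) (Fin N) ℝ) (x : Fin N → ℝ) : Prop :=
  x ∈ lassoSol lam y A ∧
    ∀ x2 ∈ lassoSol lam y A, Function.support x2 ⊆ Function.support x → x2 = x

/-!
The solution set is compact and convex, so by Krein–Milman it is the closed convex hull of its
extreme points; having two points, it therefore has two extreme points. Strict convexity of the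
quadratic term forces all solutions to share `A x`, hence also `‖x‖₁`. If `x` is extreme and
`x'` is a solution with `supp x' ⊆ supp x`, then for small `t > 0` the points `x ± t (x' - x)`
keep the signs of `x` on its support, so their `ℓ¹` norms average to `‖x‖₁`; both are solutions
with midpoint `x`, which forces `x' = x`.
-/

open Set Filter Topology Function

theorem abs_add_add_abs_sub_of_abs_le {a b : ℝ} (h : |b| ≤ |a|) :
    |a + b| + |a - b| = 2 * |a| := by
  cases abs_cases a <;> cases abs_cases b <;> cases abs_cases (a + b) <;>
    cases abs_cases (a - b) <;> linarith

theorem sum_abs_add_add_sum_abs_sub_of_abs_le {ι : Type*} [Fintype ι] {x d : ι → ℝ}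
    (h : ∀ j, |d j| ≤ |x j|) :
    ∑ j, |x j + d j| + ∑ j, |x j - d j| = 2 * ∑ j, |x j| := by
  rw [← Finset.sum_add_distrib, Finset.mul_sum]
  exact Finset.sum_congr rfl fun j _ => abs_add_add_abs_sub_of_abs_le (h j)

theorem eventually_forall_abs_mul_le_abs {ι : Type*} [Finite ι] {x d : ι → ℝ}
    (h : support d ⊆ support x) : ∀ᶠ t in 𝓝 (0 : ℝ), ∀ j, |t * d j| ≤ |x j| := by
  refine eventually_all.2 fun j => ?_
  by_cases hxj : x j = 0
  · have hdj : d j = 0 := not_not.1 fun hdj => h hdj hxj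
    simp [hdj, hxj]
  · have hcont : Tendsto (fun t : ℝ => |t * d j|) (𝓝 0) (𝓝 0) :=
      (by fun_prop : Continuous fun t : ℝ => |t * d j|).tendsto' 0 0 (by simp)
    exact hcont.eventually (eventually_le_nhds (abs_pos.2 hxj))

theorem IsCompact.extremePoints_nontrivial {E : Type*} [AddCommGroup E] [Module ℝ E]
    [TopologicalSpace E] [T2Space E] [IsTopologicalAddGroup E] [ContinuousSMul ℝ E]
    [LocallyConvexSpace ℝ E] {s : Set E} (hscomp : IsCompact s) (hsconv : Convex ℝ s)
    (hs : s.Nontrivial) : (s.extremePoints ℝ).Nontrivial := by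
  by_contra h
  refine hs.not_subsingleton ?_
  rw [← closure_convexHull_extremePoints hscomp hsconv]
  refine Subsingleton.closure ?_
  obtain h | ⟨e, he⟩ := (not_nontrivial_iff.1 h).eq_empty_or_singleton
  · simp [h]
  · simp [he]

section Lasso

variable {m N : ℕ} {lam : ℝ} {y : Fin m → ℝ} {A : Matrix (Fin m) (Fin N) ℝ}

theorem continuous_lassoObj : Continuous (lassoObj lam y A) := by
  unfold lassoObj
  fun_prop

theorem mul_sum_abs_le_lassoObj (x : Fin N → ℝ) :
    lam * ∑ j, |x j| ≤ lassoObj lam y A x :=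
  le_add_of_nonneg_left (Finset.sum_nonneg fun _ _ => sq_nonneg _)

theorem convexOn_lassoObj (hlam : 0 ≤ lam) : ConvexOn ℝ univ (lassoObj lam y A) := by
  refine ⟨convex_univ, fun u _ v _ a b ha hb hab => ?_⟩
  have hsq (p q : ℝ) : (a * p + b * q) ^ 2 ≤ a * p ^ 2 + b * q ^ 2 :=
    (Even.convexOn_pow even_two).2 trivial trivial ha hb hab
  have habs (p q : ℝ) : |a * p + b * q| ≤ a * |p| + b * |q| := by
    simpa [abs_mul, abs_of_nonneg ha, abs_of_nonneg hb] using abs_add_le (a * p) (b * q)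
  have hquad : ∑ i, ((A *ᵥ (a • u + b • v)) i - y i) ^ 2 ≤
      a * ∑ i, ((A *ᵥ u) i - y i) ^ 2 + b * ∑ i, ((A *ᵥ v) i - y i) ^ 2 := by
    rw [Finset.mul_sum, Finset.mul_sum, ← Finset.sum_add_distrib]
    refine Finset.sum_le_sum fun i _ => ?_
    have hi : (A *ᵥ (a • u + b • v)) i - y i =
        a * ((A *ᵥ u) i - y i) + b * ((A *ᵥ v) i - y i) := by
      simp only [mulVec_add, mulVec_smul, Pi.add_apply, Pi.smul_apply, smul_eq_mul]
      linear_combination (y i) * hab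
    exact hi ▸ hsq _ _
  have hl1 : ∑ j, |(a • u + b • v) j| ≤ a * ∑ j, |u j| + b * ∑ j, |v j| := by
    rw [Finset.mul_sum, Finset.mul_sum, ← Finset.sum_add_distrib]
    exact Finset.sum_le_sum fun j _ => habs (u j) (v j)
  simp only [lassoObj, smul_eq_mul]
  linarith [mul_le_mul_of_nonneg_left hl1 hlam]

theorem isClosed_lassoSol : IsClosed (lassoSol lam y A) := by
  rw [lassoSol, ofPred_forall]
  exact isClosed_iInter fun z => isClosed_le continuous_lassoObj continuous_const

theorem convex_lassoSol (hlam : 0 ≤ lam) : Convex ℝ (lassoSol lam y A) := by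
  rw [lassoSol, ofPred_forall]
  exact convex_iInter fun z => by
    simpa using (convexOn_lassoObj hlam).convex_le (lassoObj lam y A z)

theorem lassoSol_subset_closedBall (hlam : 0 < lam) :
    lassoSol lam y A ⊆ Metric.closedBall 0 (lassoObj lam y A 0 / lam) := by
  intro x hx
  have hl1 : ∑ j, |x j| ≤ lassoObj lam y A 0 / lam := by
    rw [le_div_iff₀' hlam]
    exact (mul_sum_abs_le_lassoObj x).trans (hx 0)
  rw [mem_closedBall_zero_iff, pi_norm_le_iff_of_nonneg
    ((Finset.sum_nonneg fun j _ => abs_nonneg (x j)).trans hl1)]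
  exact fun j => (Finset.single_le_sum (fun j _ => abs_nonneg (x j)) (Finset.mem_univ j)).trans hl1

theorem isCompact_lassoSol (hlam : 0 < lam) : IsCompact (lassoSol lam y A) :=
  (isCompact_closedBall _ _).of_isClosed_subset isClosed_lassoSol
    (lassoSol_subset_closedBall hlam)

theorem lassoObj_eq_of_mem_lassoSol {u v : Fin N → ℝ} (hu : u ∈ lassoSol lam y A)
    (hv : v ∈ lassoSol lam y A) : lassoObj lam y A u = lassoObj lam y A v :=
  le_antisymm (hu v) (hv u)

theorem lassoObj_midpoint_add_le (hlam : 0 ≤ lam) (u v : Fin N → ℝ) :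
    lassoObj lam y A ((2⁻¹ : ℝ) • (u + v)) + ∑ i, ((A *ᵥ u) i - (A *ᵥ v) i) ^ 2 / 4 ≤
      (lassoObj lam y A u + lassoObj lam y A v) / 2 := by
  have hquad : ∑ i, ((A *ᵥ ((2⁻¹ : ℝ) • (u + v))) i - y i) ^ 2 +
      ∑ i, ((A *ᵥ u) i - (A *ᵥ v) i) ^ 2 / 4 =
      (∑ i, ((A *ᵥ u) i - y i) ^ 2 + ∑ i, ((A *ᵥ v) i - y i) ^ 2) / 2 := by
    rw [← Finset.sum_add_distrib, ← Finset.sum_add_distrib, Finset.sum_div]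
    refine Finset.sum_congr rfl fun i _ => ?_
    simp only [mulVec_smul, mulVec_add, Pi.smul_apply, Pi.add_apply, smul_eq_mul]
    ring
  have hl1 : ∑ j, |((2⁻¹ : ℝ) • (u + v)) j| ≤ (∑ j, |u j| + ∑ j, |v j|) / 2 := by
    rw [← Finset.sum_add_distrib, Finset.sum_div]
    refine Finset.sum_le_sum fun j _ => ?_
    rw [Pi.smul_apply, Pi.add_apply, smul_eq_mul, abs_mul,
      abs_of_pos (by norm_num : (0 : ℝ) < 2⁻¹)]
    linarith [abs_add_le (u j) (v j)]
  simp only [lassoObj]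
  linarith [mul_le_mul_of_nonneg_left hl1 hlam]

theorem mulVec_eq_of_mem_lassoSol (hlam : 0 ≤ lam) {u v : Fin N → ℝ}
    (hu : u ∈ lassoSol lam y A) (hv : v ∈ lassoSol lam y A) : A *ᵥ u = A *ᵥ v := by
  have hle : ∑ i, ((A *ᵥ u) i - (A *ᵥ v) i) ^ 2 / 4 ≤ 0 := by
    have := lassoObj_midpoint_add_le (y := y) (A := A) hlam u v
    linarith [hu ((2⁻¹ : ℝ) • (u + v)), lassoObj_eq_of_mem_lassoSol hu hv]
  have hzero := (Finset.sum_eq_zero_iff_of_nonneg fun i _ => by positivity).1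
    (hle.antisymm (Finset.sum_nonneg fun i _ => by positivity))
  funext i
  have hi := hzero i (Finset.mem_univ i)
  nlinarith [sq_nonneg ((A *ᵥ u) i - (A *ᵥ v) i)]

theorem sum_abs_eq_of_mem_lassoSol (hlam : 0 < lam) {u v : Fin N → ℝ}
    (hu : u ∈ lassoSol lam y A) (hv : v ∈ lassoSol lam y A) :
    ∑ j, |u j| = ∑ j, |v j| := by
  have h := lassoObj_eq_of_mem_lassoSol hu hv
  rw [lassoObj, lassoObj, mulVec_eq_of_mem_lassoSol hlam.le hu hv, add_right_inj] at h
  exact mul_left_cancel₀ hlam.ne' h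

theorem mem_lassoSol_of_mulVec_eq_of_sum_abs_le (hlam : 0 ≤ lam) {u v : Fin N → ℝ}
    (hu : u ∈ lassoSol lam y A) (hA : A *ᵥ v = A *ᵥ u) (hl1 : ∑ j, |v j| ≤ ∑ j, |u j|) :
    v ∈ lassoSol lam y A := fun z => by
  refine le_trans ?_ (hu z)
  rw [lassoObj, lassoObj, hA]
  gcongr

theorem minimalSupportSol_of_mem_extremePoints (hlam : 0 < lam) {x : Fin N → ℝ}
    (hx : x ∈ (lassoSol lam y A).extremePoints ℝ) : MinimalSupportSol lam y A x := by
  refine ⟨hx.1, fun x' hx' hsupp => ?_⟩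
  set d := x' - x
  have hd : support d ⊆ support x := (support_sub x' x).trans (union_subset hsupp subset_rfl)
  obtain ⟨t, hsmall, ht0, ht1⟩ := (((eventually_forall_abs_mul_le_abs hd).filter_mono
    nhdsWithin_le_nhds).and (Ioo_mem_nhdsGT one_pos)).exists
  have hplus : x + t • d ∈ lassoSol lam y A :=
    (convex_lassoSol hlam.le).add_smul_sub_mem hx.1 hx' ⟨ht0.le, ht1.le⟩
  have hminus : x - t • d ∈ lassoSol lam y A := by
    refine mem_lassoSol_of_mulVec_eq_of_sum_abs_le hlam.le hx.1 ?_ (le_of_eq ?_)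
    · rw [mulVec_sub, mulVec_smul, mulVec_sub, mulVec_eq_of_mem_lassoSol hlam.le hx' hx.1]
      simp
    · have hsum := sum_abs_add_add_sum_abs_sub_of_abs_le hsmall
      have hplus_l1 := sum_abs_eq_of_mem_lassoSol hlam hplus hx.1
      simp only [Pi.add_apply, Pi.sub_apply, Pi.smul_apply, smul_eq_mul] at hplus_l1 ⊢
      linarith
  have hmid : x ∈ openSegment ℝ (x + t • d) (x - t • d) :=
    ⟨2⁻¹, 2⁻¹, by norm_num, by norm_num, by norm_num, by module⟩
  have htd : t • d = 0 := by simpa using hx.2 hplus hminus hmid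
  simpa [d, sub_eq_zero, ht0.ne'] using htd

end Lasso

/-- If the LASSO solution set has more than one point, it contains at least two
distinct solutions with minimal support. -/
theorem lasso_two_minimal_support_solutions {m N : ℕ} (lam : ℝ) (hlam : 0 < lam)
    (y : Fin m → ℝ) (A : Matrix (Fin m) (Fin N) ℝ)
    (h : ∃ a ∈ lassoSol lam y A, ∃ b ∈ lassoSol lam y A, a ≠ b) :
    ∃ x1 x2 : Fin N → ℝ, MinimalSupportSol lam y A x1 ∧ MinimalSupportSol lam y A x2 ∧
      x1 ≠ x2 := by
  obtain ⟨x1, hx1, x2, hx2, hne⟩ :=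
    (isCompact_lassoSol hlam).extremePoints_nontrivial (convex_lassoSol hlam.le) h
  exact ⟨x1, x2, minimalSupportSol_of_mem_extremePoints hlam hx1,
    minimalSupportSol_of_mem_extremePoints hlam hx2, hne⟩
end

section
/- If x ∈ Sol(y,A) has support S, ‖A_{Sᶜ}ᵀ(Ax − y)‖_∞ < λ/2, and A_Sᵀ A_S is invertible, then x is the unique LASSO minimiser: Sol(y,A) = {x}. -/
open Matrix BigOperators

/-- The column submatrix of `A` with columns indexed by the finset `S`. -/
def colSub {m N : ℕ} (A : Matrix (Fin m) (Fin N) ℝ) (S : Finset (Fin N)) :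
    Matrix (Fin m) {j // j ∈ S} ℝ :=
  A.submatrix id (fun j : {j // j ∈ S} => (j : Fin N))
lemma lassoObj_perturb {m N : ℕ} (lam : ℝ) (y : Fin m → ℝ)
    (A : Matrix (Fin m) (Fin N) ℝ) (z : Fin N → ℝ) (j : Fin N) (t : ℝ) :
    lassoObj lam y A (z + t • (Pi.single j 1 : Fin N → ℝ)) =
      lassoObj lam y A z + 2 * t * (Aᵀ.mulVec (A.mulVec z - y) j)
        + t ^ 2 * (∑ i, (A i j) ^ 2) + lam * (|z j + t| - |z j|) := by
  have hmv : A.mulVec (z + t • (Pi.single j 1 : Fin N → ℝ)) = fun i => A.mulVec z i + t * A i j := by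
    funext i
    simp [Matrix.mulVec_add, Matrix.mulVec_smul, Matrix.mulVec_single, mul_comm]
  have hc : Aᵀ.mulVec (A.mulVec z - y) j = ∑ i, A i j * (A.mulVec z i - y i) := by
    simp [Matrix.mulVec, dotProduct, Matrix.transpose_apply, Pi.sub_apply]
  have hquad : ∑ i, (A.mulVec (z + t • (Pi.single j 1 : Fin N → ℝ)) i - y i) ^ 2
      = ∑ i, (A.mulVec z i - y i) ^ 2 + 2 * t * (Aᵀ.mulVec (A.mulVec z - y) j)
        + t ^ 2 * (∑ i, (A i j) ^ 2) := by
    rw [hc, hmv, Finset.mul_sum, Finset.mul_sum, ← Finset.sum_add_distrib,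
      ← Finset.sum_add_distrib]
    exact Finset.sum_congr rfl fun i _ => by ring
  have hl1 : ∑ k, |(z + t • (Pi.single j 1 : Fin N → ℝ)) k| = ∑ k, |z k| + (|z j + t| - |z j|) := by
    rw [← Finset.sum_erase_add Finset.univ _ (Finset.mem_univ j),
      ← Finset.sum_erase_add Finset.univ (fun k => |z k|) (Finset.mem_univ j)]
    have h1 : ∑ k ∈ Finset.univ.erase j, |(z + t • (Pi.single j 1 : Fin N → ℝ)) k|
        = ∑ k ∈ Finset.univ.erase j, |z k| := by
      refine Finset.sum_congr rfl fun k hk => ?_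
      have : k ≠ j := (Finset.mem_erase.mp hk).1
      simp [Pi.single_apply, this]
    rw [h1]
    simp [Pi.single_apply]
    ring
  unfold lassoObj
  rw [hquad, hl1]
  ring

-- any two minimisers have the same image
lemma image_eq_of_sols {m N : ℕ} (lam : ℝ) (y : Fin m → ℝ)
    (A : Matrix (Fin m) (Fin N) ℝ) (hlam : 0 ≤ lam) (x z : Fin N → ℝ)
    (hx : x ∈ lassoSol lam y A) (hz : z ∈ lassoSol lam y A) :
    A.mulVec z = A.mulVec x := by
  have hfz : lassoObj lam y A z = lassoObj lam y A x := le_antisymm (hz x) (hx z)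
  set w : Fin N → ℝ := (1/2 : ℝ) • (x + z) with hw
  have hmw : ∀ i, A.mulVec w i = (A.mulVec x i + A.mulVec z i) / 2 := by
    intro i
    simp [hw, Matrix.mulVec_smul, Matrix.mulVec_add]
    ring
  have hquad : ∑ i, (A.mulVec w i - y i) ^ 2
      = (∑ i, (A.mulVec x i - y i) ^ 2 + ∑ i, (A.mulVec z i - y i) ^ 2) / 2
        - ∑ i, ((A.mulVec x i - A.mulVec z i) / 2) ^ 2 := by
    rw [← Finset.sum_add_distrib, Finset.sum_div, ← Finset.sum_sub_distrib]
    refine Finset.sum_congr rfl fun i _ => ?_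
    rw [hmw i]; ring
  have hl1 : ∑ k, |w k| ≤ (∑ k, |x k| + ∑ k, |z k|) / 2 := by
    rw [← Finset.sum_add_distrib, Finset.sum_div]
    refine Finset.sum_le_sum fun k _ => ?_
    have : w k = (x k + z k) / 2 := by simp [hw]; ring
    rw [this, abs_div]
    have := abs_add_le (x k) (z k)
    have h2 : |(2:ℝ)| = 2 := by norm_num
    rw [h2]
    linarith
  have hkey : ∑ i, ((A.mulVec x i - A.mulVec z i) / 2) ^ 2 ≤ 0 := by
    have h1 := hz w
    have h2 : lassoObj lam y A w ≤ (lassoObj lam y A x + lassoObj lam y A z) / 2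
        - ∑ i, ((A.mulVec x i - A.mulVec z i) / 2) ^ 2 := by
      unfold lassoObj
      rw [hquad]
      have h3 := mul_le_mul_of_nonneg_left hl1 hlam
      linarith
    rw [hfz] at h1
    linarith
  have hzero : ∀ i, A.mulVec z i = A.mulVec x i := by
    intro i
    have hnn : ∀ i ∈ Finset.univ, (0:ℝ) ≤ ((A.mulVec x i - A.mulVec z i) / 2) ^ 2 :=
      fun i _ => sq_nonneg _
    have hsum0 : ∑ i, ((A.mulVec x i - A.mulVec z i) / 2) ^ 2 = 0 :=
      le_antisymm hkey (Finset.sum_nonneg hnn)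
    have := (Finset.sum_eq_zero_iff_of_nonneg hnn).mp hsum0 i (Finset.mem_univ i)
    have := pow_eq_zero_iff (n := 2) (by norm_num) |>.mp this
    have : A.mulVec x i - A.mulVec z i = 0 := by
      field_simp at this
      linarith [this]
    linarith
  funext i
  exact hzero i

/-- If the KKT inequality is strict off the support and the Gram matrix on the
support is invertible, the LASSO minimiser is unique. -/
theorem lasso_unique_of_strict_kkt {m N : ℕ} (lam : ℝ) (hlam : 0 < lam)
    (y : Fin m → ℝ) (A : Matrix (Fin m) (Fin N) ℝ)
    (x : Fin N → ℝ) (hx : x ∈ lassoSol lam y A)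
    (S : Finset (Fin N)) (hS : ∀ j, j ∈ S ↔ x j ≠ 0)
    (hkkt : ∀ j ∉ S, |Aᵀ.mulVec (A.mulVec x - y) j| < lam / 2)
    (hGram : IsUnit ((colSub A S)ᵀ * colSub A S)) :
    lassoSol lam y A = {x} := by
  ext z
  simp only [Set.mem_singleton_iff]
  constructor
  · intro hz
    -- equal images
    have haz : A.mulVec z = A.mulVec x := image_eq_of_sols lam y A hlam.le x z hx hz
    -- support of z inside S
    have hsupp : ∀ j ∉ S, z j = 0 := by
      intro j hj
      by_contra hzj
      set c : ℝ := Aᵀ.mulVec (A.mulVec x - y) j with hc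
      have hcz : Aᵀ.mulVec (A.mulVec z - y) j = c := by rw [haz]
      have hclt : |c| < lam / 2 := hkkt j hj
      set K : ℝ := ∑ i, (A i j) ^ 2 with hK
      have hK0 : 0 ≤ K := Finset.sum_nonneg fun i _ => sq_nonneg _
      set D : ℝ := 2 * z j * c + lam * |z j| with hD
      have habs : 0 < |z j| := abs_pos.mpr hzj
      have hD0 : 0 < D := by
        have h1 : |2 * z j * c| ≤ 2 * |z j| * |c| := by
          rw [abs_mul, abs_mul]
          simp [abs_of_nonneg]
        have h2 : 2 * |z j| * |c| < lam * |z j| := by nlinarith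
        have := neg_abs_le (2 * z j * c)
        nlinarith
      set E : ℝ := (z j) ^ 2 * K with hE
      have hE0 : 0 ≤ E := mul_nonneg (sq_nonneg _) hK0
      set s : ℝ := D / (D + E) with hs
      have hDE : 0 < D + E := by linarith
      have hs0 : 0 < s := div_pos hD0 hDE
      have hs1 : s ≤ 1 := by
        rw [hs, div_le_one hDE]; linarith
      -- the perturbation
      have hmin := hz (z + (-(s * z j)) • (Pi.single j 1 : Fin N → ℝ))
      rw [lassoObj_perturb, hcz] at hmin
      have habs2 : |z j + -(s * z j)| = (1 - s) * |z j| := by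
        have : z j + -(s * z j) = (1 - s) * z j := by ring
        rw [this, abs_mul, abs_of_nonneg (by linarith : (0:ℝ) ≤ 1 - s)]
      rw [habs2, ← hK] at hmin
      -- hmin : f z ≤ f z + 2*(-(s*zj))*c + (s*zj)^2*K + lam*((1-s)|zj| - |zj|)
      have hmin2 : s * D ≤ s * (s * E) := by rw [hD, hE]; nlinarith [hmin]
      have hineq : D ≤ s * E := le_of_mul_le_mul_left hmin2 hs0
      have hsE : s * E * (D + E) = D * E := by
        rw [hs]; field_simp
      nlinarith [mul_le_mul_of_nonneg_right hineq hDE.le, mul_pos hD0 hD0]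
    have hxs : ∀ j ∉ S, x j = 0 := by
      intro j hj
      by_contra h
      exact hj ((hS j).mpr h)
    -- difference vector supported on S
    set w : Fin N → ℝ := z - x with hwdef
    have hAw : A.mulVec w = 0 := by
      rw [hwdef, Matrix.mulVec_sub, haz, sub_self]
    set v : {j // j ∈ S} → ℝ := fun j => w (j : Fin N) with hv
    have hcol : (colSub A S).mulVec v = 0 := by
      funext i
      have : (colSub A S).mulVec v i = ∑ j : {j // j ∈ S}, A i (j : Fin N) * w (j : Fin N) := by
        simp [colSub, Matrix.mulVec, dotProduct, Matrix.submatrix_apply, hv]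
      rw [this]
      have h2 : ∑ j : {j // j ∈ S}, A i (j : Fin N) * w (j : Fin N)
          = ∑ j ∈ S, A i j * w j := Finset.sum_coe_sort S (fun j => A i j * w j)
      rw [h2]
      have h3 : ∑ j ∈ S, A i j * w j = ∑ j, A i j * w j := by
        refine Finset.sum_subset (Finset.subset_univ S) fun j _ hj => ?_
        have : w j = 0 := by
          simp [hwdef, hsupp j hj, hxs j hj]
        rw [this, mul_zero]
      rw [h3]
      have h4 : A.mulVec w i = 0 := by rw [hAw]; rfl
      simpa [Matrix.mulVec, dotProduct] using h4
    have hGv : ((colSub A S)ᵀ * colSub A S).mulVec v = 0 := by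
      rw [← Matrix.mulVec_mulVec, hcol, Matrix.mulVec_zero]
    obtain ⟨u, hu⟩ := hGram
    have hinv : ((↑u⁻¹ : Matrix {j // j ∈ S} {j // j ∈ S} ℝ) * ((colSub A S)ᵀ * colSub A S)) = 1 := by
      rw [← hu]; exact u.inv_mul
    have hv0 : v = 0 := by
      calc v = (1 : Matrix {j // j ∈ S} {j // j ∈ S} ℝ).mulVec v := by rw [Matrix.one_mulVec]
        _ = ((↑u⁻¹ : Matrix _ _ ℝ) * ((colSub A S)ᵀ * colSub A S)).mulVec v := by rw [hinv]
        _ = (↑u⁻¹ : Matrix _ _ ℝ).mulVec (((colSub A S)ᵀ * colSub A S).mulVec v) := by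
            rw [Matrix.mulVec_mulVec]
        _ = 0 := by rw [hGv, Matrix.mulVec_zero]
    funext j
    by_cases hjS : j ∈ S
    · have : v ⟨j, hjS⟩ = 0 := by rw [hv0]; rfl
      have : w j = 0 := this
      have := sub_eq_zero.mp this
      exact this
    · rw [hsupp j hjS, hxs j hjS]
  · rintro rfl; exact hx
end

section
/- σ₃ upper bound on stability support: if x ∈ Sol(y,A) and i is an index with |xᵢ| = t > 0, then stsp(y,A) ≤ t·‖A‖_max. Concretely, setting ỹ = y − xᵢ A eᵢ, the vector x̃ = x − xᵢ eᵢ is a minimiser of the LASSO problem with input (ỹ, A), and supp(x̃) ≠ supp(x). -/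
open Matrix BigOperators

/-- The stability support: the distance to support change. -/
noncomputable def stsp {m N : ℕ} (lam : ℝ) (y : Fin m → ℝ)
    (A : Matrix (Fin m) (Fin N) ℝ) : ℝ :=
  sInf {δ : ℝ | 0 ≤ δ ∧
    ∃ (yt : Fin m → ℝ) (At : Matrix (Fin m) (Fin N) ℝ)
      (x xt : Fin N → ℝ), x ∈ lassoSol lam y A ∧ xt ∈ lassoSol lam yt At ∧
      (∀ i, |yt i - y i| ≤ δ) ∧ (∀ i j, |A i j - At i j| ≤ δ) ∧
      Function.support x ≠ Function.support xt}

/-- The entrywise max "norm" of a matrix. -/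
noncomputable def matMax {m N : ℕ} (A : Matrix (Fin m) (Fin N) ℝ) : ℝ :=
  ⨆ i, ⨆ j, |A i j|
/-- σ₃ upper bound on the stability support: deleting a nonzero entry of size t of a
minimiser and correspondingly shifting y yields a minimiser with different support,
whence stsp(y,A) ≤ t·‖A‖_max. -/
theorem lasso_sigma3_upper_bound {m N : ℕ} (lam : ℝ) (hlam : 0 < lam)
    (y : Fin m → ℝ) (A : Matrix (Fin m) (Fin N) ℝ)
    (x : Fin N → ℝ) (hx : x ∈ lassoSol lam y A)
    (i : Fin N) (t : ℝ) (ht : 0 < t) (hxi : |x i| = t) :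
    (Function.update x i 0) ∈ lassoSol lam (fun k => y k - x i * A k i) A ∧
    Function.support (Function.update x i 0) ≠ Function.support x ∧
    stsp lam y A ≤ t * matMax A := by
  set xt := Function.update x i 0 with hxtdef
  set yt : Fin m → ℝ := fun k => y k - x i * A k i with hytdef
  have hxine : x i ≠ 0 := by
    intro h; rw [h, abs_zero] at hxi; linarith
  have hmul : ∀ k, A.mulVec xt k = A.mulVec x k - x i * A k i := by
    intro k
    simp only [Matrix.mulVec, dotProduct]
    have h1 : ∀ j ∈ Finset.univ, A k j * xt j
        = A k j * x j - (if j = i then A k i * x i else 0) := by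
      intro j _
      by_cases h : j = i
      · subst h; simp [hxtdef]
      · simp [hxtdef, Function.update_of_ne h, h]
    rw [Finset.sum_congr rfl h1, Finset.sum_sub_distrib,
      Finset.sum_ite_eq' Finset.univ i]
    simp [mul_comm]
  have habs : ∑ j, |xt j| = ∑ j, |x j| - |x i| := by
    have h1 : ∀ j ∈ Finset.univ, |xt j|
        = |x j| - (if j = i then |x i| else 0) := by
      intro j _
      by_cases h : j = i
      · subst h; simp [hxtdef]
      · simp [hxtdef, Function.update_of_ne h, h]
    rw [Finset.sum_congr rfl h1, Finset.sum_sub_distrib,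
      Finset.sum_ite_eq' Finset.univ i]
    simp
  have hsol : xt ∈ lassoSol lam yt A := by
    intro z
    set z' : Fin N → ℝ := fun j => z j + (if j = i then x i else 0) with hz'def
    have hmz : ∀ k, A.mulVec z' k = A.mulVec z k + x i * A k i := by
      intro k
      simp only [Matrix.mulVec, dotProduct]
      have h1 : ∀ j ∈ Finset.univ, A k j * z' j
          = A k j * z j + (if j = i then A k i * x i else 0) := by
        intro j _
        by_cases h : j = i
        · subst h; simp [hz'def]; ring
        · simp [hz'def, h]
      rw [Finset.sum_congr rfl h1, Finset.sum_add_distrib,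
        Finset.sum_ite_eq' Finset.univ i]
      simp [mul_comm]
    have habsz : ∑ j, |z' j| ≤ ∑ j, |z j| + |x i| := by
      have h1 : ∀ j ∈ Finset.univ, |z' j|
          ≤ |z j| + (if j = i then |x i| else 0) := by
        intro j _
        by_cases h : j = i
        · subst h
          simp only [hz'def, if_pos rfl]
          exact abs_add_le _ _
        · simp [hz'def, h]
      calc ∑ j, |z' j| ≤ ∑ j, (|z j| + (if j = i then |x i| else 0)) :=
            Finset.sum_le_sum h1
        _ = ∑ j, |z j| + |x i| := by
            rw [Finset.sum_add_distrib, Finset.sum_ite_eq' Finset.univ i]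
            simp
    have hobj1 : lassoObj lam yt A xt = lassoObj lam y A x - lam * |x i| := by
      simp only [lassoObj, habs]
      have : ∀ k, A.mulVec xt k - yt k = A.mulVec x k - y k := by
        intro k; rw [hmul k]; simp only [hytdef]; ring
      rw [Finset.sum_congr rfl (fun k _ => by rw [this k])]
      ring
    have hobj2 : lassoObj lam y A z'
        ≤ (∑ k, (A.mulVec z k - yt k) ^ 2) + lam * (∑ j, |z j| + |x i|) := by
      simp only [lassoObj]
      have : ∀ k, A.mulVec z' k - y k = A.mulVec z k - yt k := by
        intro k; rw [hmz k]; simp only [hytdef]; ring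
      rw [Finset.sum_congr rfl (fun k _ => by rw [this k])]
      have := mul_le_mul_of_nonneg_left habsz hlam.le
      linarith
    have := hx z'
    calc lassoObj lam yt A xt = lassoObj lam y A x - lam * |x i| := hobj1
      _ ≤ lassoObj lam y A z' - lam * |x i| := by linarith
      _ ≤ (∑ k, (A.mulVec z k - yt k) ^ 2) + lam * (∑ j, |z j| + |x i|)
            - lam * |x i| := by linarith
      _ = lassoObj lam yt A z := by simp only [lassoObj]; ring
  have hne : Function.support xt ≠ Function.support x := by
    intro h
    have hi : i ∈ Function.support x := hxine
    rw [← h] at hi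
    simp [hxtdef, Function.support] at hi
  refine ⟨hsol, hne, ?_⟩
  have hbd : ∀ k j, |A k j| ≤ matMax A := by
    intro k j
    calc |A k j| ≤ ⨆ j', |A k j'| :=
          le_ciSup (f := fun j' => |A k j'|)
            (Set.Finite.bddAbove (Set.finite_range _)) j
      _ ≤ matMax A := by
          show _ ≤ ⨆ i', ⨆ j', |A i' j'|
          exact le_ciSup (Set.Finite.bddAbove
            (Set.finite_range fun k' => ⨆ j', |A k' j'|)) k
  have hnn : 0 ≤ matMax A :=
    Real.iSup_nonneg fun k => Real.iSup_nonneg fun j => abs_nonneg _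
  apply csInf_le ⟨0, fun d hd => hd.1⟩
  refine ⟨mul_nonneg ht.le hnn, yt, A, x, xt, hx, hsol, ?_, ?_, hne.symm⟩
  · intro k
    have : |yt k - y k| = t * |A k i| := by
      simp [hytdef, abs_mul, hxi, abs_sub_comm]
    rw [this]
    exact mul_le_mul_of_nonneg_left (hbd k i) ht.le
  · intro k j; simp [mul_nonneg ht.le hnn]
end

section
/- σ₂ upper bound on stability support: let x ∈ Sol(y,A) with support S ≠ ∅, and suppose v ∈ ℝ^N satisfies v_{Sᶜ} = 0, ‖v‖₂ = 1 and ‖A_Sᵀ A_S v_S‖₂ ≤ t. Then the perturbed matrix B = A − A v vᵀ satisfies ‖B − A‖_max ≤ √t and B_Sᵀ B_S is not invertible (indeed B_S v_S = 0). -/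
open Matrix BigOperators

/-- σ₂ upper bound construction: a rank-one perturbation of size √t kills the
invertibility of the Gram matrix on the support. -/
theorem lasso_sigma2_perturbation {m N : ℕ} (lam : ℝ) (hlam : 0 < lam)
    (y : Fin m → ℝ) (A : Matrix (Fin m) (Fin N) ℝ)
    (x : Fin N → ℝ) (hx : x ∈ lassoSol lam y A)
    (S : Finset (Fin N)) (hS : ∀ j, j ∈ S ↔ x j ≠ 0) (hSne : S.Nonempty)
    (v : Fin N → ℝ) (hv0 : ∀ j ∉ S, v j = 0) (hv1 : ∑ j, (v j) ^ 2 = 1)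
    (t : ℝ)
    (hvt : Real.sqrt (∑ j, (((colSub A S)ᵀ * colSub A S).mulVec
      (fun j : {j // j ∈ S} => v j) j) ^ 2) ≤ t) :
    (∀ i j, |(A - Matrix.vecMulVec (A.mulVec v) v) i j - A i j| ≤ Real.sqrt t) ∧
    (colSub (A - Matrix.vecMulVec (A.mulVec v) v) S).mulVec
      (fun j : {j // j ∈ S} => v j) = 0 ∧
    ¬ IsUnit ((colSub (A - Matrix.vecMulVec (A.mulVec v) v) S)ᵀ *
      colSub (A - Matrix.vecMulVec (A.mulVec v) v) S) := by
  classical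
  set vS : {j // j ∈ S} → ℝ := fun j => v j with hvS
  -- sum of squares of v over S is 1
  have hsub : ∑ j ∈ S, (v j)^2 = ∑ j, (v j)^2 :=
    Finset.sum_subset (Finset.subset_univ S)
      (fun j _ hj => by rw [hv0 j hj]; ring)
  have hv1S : ∑ j : {j // j ∈ S}, (vS j) ^ 2 = 1 := by
    rw [Finset.sum_coe_sort S (fun j => (v j) ^ 2), hsub, hv1]
  -- Av equals colSub A S applied to vS
  have hAv : A.mulVec v = (colSub A S).mulVec vS := by
    funext i
    simp only [Matrix.mulVec, dotProduct, colSub, Matrix.submatrix_apply, id]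
    rw [Finset.sum_coe_sort S (fun j => A i j * v j)]
    exact (Finset.sum_subset (Finset.subset_univ S)
      (fun j _ hj => by rw [hv0 j hj]; ring)).symm
  set w : Fin m → ℝ := (colSub A S).mulVec vS with hw
  -- Gram vector
  set g : {j // j ∈ S} → ℝ := ((colSub A S)ᵀ * colSub A S).mulVec vS with hg
  have hgw : ∀ j, g j = ∑ i, colSub A S i j * w i := by
    intro j
    rw [hg, ← Matrix.mulVec_mulVec]
    simp [Matrix.mulVec, dotProduct, Matrix.transpose_apply, hw]
  -- key: ∑ w² ≤ t
  have hgnn : (0:ℝ) ≤ ∑ j, (g j)^2 := Finset.sum_nonneg fun _ _ => sq_nonneg _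
  have ht0 : 0 ≤ t := le_trans (Real.sqrt_nonneg _) hvt
  have hwsq : ∑ i, (w i)^2 ≤ t := by
    have h1 : ∑ i, (w i)^2 = ∑ j, vS j * g j := by
      simp_rw [hgw, Finset.mul_sum]
      rw [Finset.sum_comm]
      apply Finset.sum_congr rfl
      intro i _
      have hwi : w i = ∑ j, colSub A S i j * vS j := by
        simp [hw, Matrix.mulVec, dotProduct]
      rw [show (w i)^2 = (∑ j, colSub A S i j * vS j) * w i from by
        rw [← hwi, pow_two], Finset.sum_mul]
      apply Finset.sum_congr rfl
      intro j _
      ring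
    have h2 : (∑ j, vS j * g j)^2 ≤ (∑ j, (vS j)^2) * ∑ j, (g j)^2 :=
      Finset.sum_mul_sq_le_sq_mul_sq _ _ _
    rw [hv1S, one_mul] at h2
    have h3 : ∑ j, (g j)^2 ≤ t^2 := by
      have := Real.sqrt_le_sqrt (le_of_eq (rfl : ∑ j, (g j)^2 = ∑ j, (g j)^2))
      nlinarith [Real.sq_sqrt hgnn, Real.sqrt_nonneg (∑ j, (g j)^2), hvt]
    nlinarith [Finset.sum_nonneg (fun i (_ : i ∈ Finset.univ) => sq_nonneg (w i))]
  have hwbd : ∀ i, |w i| ≤ Real.sqrt t := by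
    intro i
    rw [← Real.sqrt_sq_eq_abs]
    apply Real.sqrt_le_sqrt
    calc (w i)^2 ≤ ∑ i', (w i')^2 :=
      Finset.single_le_sum (fun i' _ => sq_nonneg (w i')) (Finset.mem_univ i)
    _ ≤ t := hwsq
  have hvbd : ∀ j, |v j| ≤ 1 := by
    intro j
    have : (v j)^2 ≤ 1 := by
      rw [← hv1]
      exact Finset.single_le_sum (fun j' _ => sq_nonneg (v j')) (Finset.mem_univ j)
    nlinarith [abs_nonneg (v j), sq_abs (v j)]
  have hker : (colSub (A - Matrix.vecMulVec (A.mulVec v) v) S).mulVec vS = 0 := by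
    funext i
    have hcol : ∀ (j : {j // j ∈ S}), colSub (A - Matrix.vecMulVec (A.mulVec v) v) S i j
        = colSub A S i j - w i * v j := by
      intro j
      simp [colSub, Matrix.vecMulVec_apply, hAv]
    simp only [Matrix.mulVec, dotProduct, Pi.zero_apply]
    calc ∑ j : {j // j ∈ S}, colSub (A - Matrix.vecMulVec (A.mulVec v) v) S i j * vS j
        = ∑ j : {j // j ∈ S}, (colSub A S i j * vS j - w i * ((vS j)^2)) := by
          apply Finset.sum_congr rfl; intro j _; rw [hcol]; simp [hvS]; ring
      _ = w i - w i * ∑ j : {j // j ∈ S}, (vS j)^2 := by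
          rw [Finset.sum_sub_distrib, ← Finset.mul_sum]
          simp [hw, Matrix.mulVec, dotProduct]
      _ = 0 := by rw [hv1S]; ring
  refine ⟨?_, hker, ?_⟩
  · intro i j
    have : (A - Matrix.vecMulVec (A.mulVec v) v) i j - A i j = -(w i * v j) := by
      simp [Matrix.vecMulVec_apply, hAv]
    rw [this, abs_neg, abs_mul]
    calc |w i| * |v j| ≤ Real.sqrt t * 1 :=
      mul_le_mul (hwbd i) (hvbd j) (abs_nonneg _) (Real.sqrt_nonneg _)
    _ = Real.sqrt t := mul_one _
  · intro hU
    have hG0 : ((colSub (A - Matrix.vecMulVec (A.mulVec v) v) S)ᵀ *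
        colSub (A - Matrix.vecMulVec (A.mulVec v) v) S).mulVec vS = 0 := by
      rw [← Matrix.mulVec_mulVec, hker, Matrix.mulVec_zero]
    obtain ⟨u, hu⟩ := hU
    have hvSz : vS = 0 := by
      calc vS = (1 : Matrix {j // j ∈ S} {j // j ∈ S} ℝ).mulVec vS :=
            (Matrix.one_mulVec vS).symm
        _ = ((↑u⁻¹ * ↑u : Matrix {j // j ∈ S} {j // j ∈ S} ℝ)).mulVec vS := by
            rw [Units.inv_mul]
        _ = (↑u⁻¹ : Matrix {j // j ∈ S} {j // j ∈ S} ℝ).mulVec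
              (((↑u : Matrix {j // j ∈ S} {j // j ∈ S} ℝ)).mulVec vS) := by
            rw [Matrix.mulVec_mulVec]
        _ = 0 := by rw [hu, hG0, Matrix.mulVec_zero]
    rw [hvSz] at hv1S
    simp at hv1S
end

section
/- Uniqueness after shrinking unused columns: let x be a minimiser with minimal support of the LASSO problem with input (y, U), let E be the diagonal matrix with Eᵢᵢ = 1 if i ∉ supp(x) and Eᵢᵢ = 0 otherwise, and let 0 < δ < 1. Then x is the unique minimiser of the LASSO problem with input (y, U(I − δE)), i.e. Sol(y, U − δUE) = {x}. -/
open Matrix BigOperators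

/-- Shrinking the unused columns of U makes a minimal-support solution the unique
minimiser. -/
theorem lasso_unique_after_shrinking {m N : ℕ} (lam : ℝ) (hlam : 0 < lam)
    (y : Fin m → ℝ) (U : Matrix (Fin m) (Fin N) ℝ)
    (x : Fin N → ℝ) (hx : x ∈ lassoSol lam y U)
    (hmin : ∀ x' ∈ lassoSol lam y U, Function.support x' ⊆ Function.support x → x' = x)
    (δ : ℝ) (hδ0 : 0 < δ) (hδ1 : δ < 1) :
    lassoSol lam y
      (U - δ • (U * Matrix.diagonal (fun i => if x i = 0 then (1 : ℝ) else 0))) = {x} := by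
  set e : Fin N → ℝ := fun i => if x i = 0 then (1 : ℝ) else 0 with he
  set V : Matrix (Fin m) (Fin N) ℝ := U - δ • (U * Matrix.diagonal e) with hV
  -- hat operation
  set hat : (Fin N → ℝ) → (Fin N → ℝ) := fun w j => (1 - δ * e j) * w j with hhat
  have hmulV : ∀ w : Fin N → ℝ, V.mulVec w = U.mulVec (hat w) := by
    intro w
    have : hat w = fun j => w j - δ * (e j * w j) := by
      funext j; simp [hhat]; ring
    rw [this, hV]
    ext i
    simp only [sub_mulVec, smul_mulVec, Pi.sub_apply, Pi.smul_apply, smul_eq_mul]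
    rw [← Matrix.mulVec_mulVec]
    have hd : (Matrix.diagonal e).mulVec w = fun j => e j * w j := by
      funext j; rw [Matrix.mulVec_diagonal]
    rw [hd]
    have : (fun j => w j - δ * (e j * w j)) = w - δ • fun j => e j * w j := by
      funext j; simp
    rw [this]
    simp [Matrix.mulVec_sub, Matrix.mulVec_smul]
  have hhatx : hat x = x := by
    funext j
    by_cases h : x j = 0 <;> simp [hhat, he, h]
  -- pointwise abs inequality
  have habs : ∀ (w : Fin N → ℝ) (j : Fin N), |hat w j| ≤ |w j| := by
    intro w j
    have h0 : 0 ≤ 1 - δ * e j := by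
      by_cases h : x j = 0 <;> simp [he, h] <;> linarith
    have h1 : 1 - δ * e j ≤ 1 := by
      by_cases h : x j = 0 <;> simp [he, h]; linarith
    rw [hhat, abs_mul, abs_of_nonneg h0]
    nlinarith [abs_nonneg (w j)]
  have hsum : ∀ w : Fin N → ℝ, ∑ j, |hat w j| ≤ ∑ j, |w j| :=
    fun w => Finset.sum_le_sum fun j _ => habs w j
  -- objective comparison
  have hobj : ∀ w : Fin N → ℝ,
      lassoObj lam y U (hat w) ≤ lassoObj lam y V w := by
    intro w
    unfold lassoObj
    rw [hmulV w]
    have := hsum w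
    nlinarith
  have hVx : ∀ w : Fin N → ℝ, lassoObj lam y V x = lassoObj lam y U x := by
    intro w
    unfold lassoObj
    rw [hmulV x, hhatx]
  have hxV : x ∈ lassoSol lam y V := by
    intro w
    calc lassoObj lam y V x = lassoObj lam y U x := hVx w
    _ ≤ lassoObj lam y U (hat w) := hx _
    _ ≤ lassoObj lam y V w := hobj w
  ext v
  simp only [Set.mem_singleton_iff]
  constructor
  · intro hv
    -- all inequalities are equalities
    have h1 : lassoObj lam y V v ≤ lassoObj lam y U x := by
      calc lassoObj lam y V v ≤ lassoObj lam y V x := hv x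
      _ = lassoObj lam y U x := hVx x
    have h2 : lassoObj lam y U x ≤ lassoObj lam y U (hat v) := hx _
    have h3 : lassoObj lam y U (hat v) ≤ lassoObj lam y V v := hobj v
    have heq : lassoObj lam y U (hat v) = lassoObj lam y V v := le_antisymm h3 (le_trans h1 h2)
    -- deduce sums of abs equal
    have hsumeq : ∑ j, |hat v j| = ∑ j, |v j| := by
      have : lam * ∑ j, |hat v j| = lam * ∑ j, |v j| := by
        have := heq
        unfold lassoObj at this
        rw [hmulV v] at this
        linarith
      exact mul_left_cancel₀ (ne_of_gt hlam) this
    -- so each term equal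
    have hterm : ∀ j, |hat v j| = |v j| := by
      intro j
      by_contra hne
      have hlt : |hat v j| < |v j| := lt_of_le_of_ne (habs v j) hne
      have : ∑ j, |hat v j| < ∑ j, |v j| := by
        apply Finset.sum_lt_sum (fun j _ => habs v j) ⟨j, Finset.mem_univ j, hlt⟩
      linarith
    -- support of v ⊆ support of x
    have hsupp : Function.support v ⊆ Function.support x := by
      intro j hj
      simp only [Function.mem_support] at hj ⊢
      intro hxj
      have := hterm j
      rw [hhat] at this
      simp only [he, hxj, if_pos] at this
      rw [abs_mul, abs_of_nonneg (by linarith : (0:ℝ) ≤ 1 - δ * 1)] at this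
      have habsv : 0 < |v j| := abs_pos.mpr hj
      nlinarith
    have hhatv : hat v = v := by
      funext j
      by_cases h : v j = 0
      · simp [hhat, h]
      · have hxj : x j ≠ 0 := hsupp h
        simp [hhat, he, hxj]
    have hvU : v ∈ lassoSol lam y U := by
      intro w
      have : lassoObj lam y U v ≤ lassoObj lam y U x := by
        rw [← hhatv]; exact le_trans h3 h1
      exact le_trans this (by
        calc lassoObj lam y U x ≤ lassoObj lam y U w := hx w)
    exact hmin v hvU hsupp
  · rintro rfl; exact hxV
end

section
/- Stability support is 1-Lipschitz with respect to the max-distance on inputs: for all (y,A) and (b,U) in ℝ^m × ℝ^{m×N}, stsp(b,U) ≥ stsp(y,A) − d_max[(y,A),(b,U)], where d_max is the maximum of ‖y−b‖_∞ and ‖A−U‖_max. Moreover, if d_max[(y,A),(b,U)] < stsp(y,A) then every minimiser of the LASSO problem at (b,U) has the same support as every minimiser at (y,A). -/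
open Matrix BigOperators

/-! ### Auxiliary lemmas -/

/-- The set whose infimum defines `stsp`. -/
def sset {m N : ℕ} (lam : ℝ) (y : Fin m → ℝ)
    (A : Matrix (Fin m) (Fin N) ℝ) : Set ℝ :=
  {δ : ℝ | 0 ≤ δ ∧
    ∃ (yt : Fin m → ℝ) (At : Matrix (Fin m) (Fin N) ℝ)
      (x xt : Fin N → ℝ), x ∈ lassoSol lam y A ∧ xt ∈ lassoSol lam yt At ∧
      (∀ i, |yt i - y i| ≤ δ) ∧ (∀ i j, |A i j - At i j| ≤ δ) ∧
      Function.support x ≠ Function.support xt}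

lemma stsp_eq_sInf {m N : ℕ} (lam : ℝ) (y : Fin m → ℝ)
    (A : Matrix (Fin m) (Fin N) ℝ) : stsp lam y A = sInf (sset lam y A) := rfl

lemma sset_bddBelow {m N : ℕ} (lam : ℝ) (y : Fin m → ℝ)
    (A : Matrix (Fin m) (Fin N) ℝ) : BddBelow (sset lam y A) :=
  ⟨0, fun _ hδ => hδ.1⟩

lemma stsp_nonneg {m N : ℕ} (lam : ℝ) (y : Fin m → ℝ)
    (A : Matrix (Fin m) (Fin N) ℝ) : 0 ≤ stsp lam y A :=
  Real.sInf_nonneg (fun _ hδ => hδ.1)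

lemma le_iSup_fin {n : ℕ} (f : Fin n → ℝ) (i : Fin n) : f i ≤ ⨆ j, f j :=
  le_ciSup (Set.Finite.bddAbove (Set.finite_range f)) i

lemma lasso_continuous {m N : ℕ} (lam : ℝ) (y : Fin m → ℝ)
    (A : Matrix (Fin m) (Fin N) ℝ) : Continuous (lassoObj lam y A) := by
  show Continuous fun x : Fin N → ℝ =>
    (∑ i, ((∑ j, A i j * x j) - y i) ^ 2) + lam * ∑ j, |x j|
  apply Continuous.add
  · apply continuous_finset_sum
    intro i _
    exact (Continuous.sub (continuous_finset_sum _ fun j _ =>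
      (continuous_const.mul (continuous_apply j))) continuous_const).pow 2
  · exact continuous_const.mul (continuous_finset_sum _ fun j _ => (continuous_apply j).abs)

lemma exists_lasso_sol {m N : ℕ} {lam : ℝ} (hlam : 0 < lam) (y : Fin m → ℝ)
    (A : Matrix (Fin m) (Fin N) ℝ) : ∃ x, x ∈ lassoSol lam y A := by
  have hco : ∀ x : Fin N → ℝ, lam * ‖x‖ ≤ lassoObj lam y A x := by
    intro x
    have h1 : ‖x‖ ≤ ∑ j, |x j| := by
      rw [pi_norm_le_iff_of_nonneg (Finset.sum_nonneg fun j _ => abs_nonneg _)]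
      intro i
      rw [Real.norm_eq_abs]
      exact Finset.single_le_sum (fun j _ => abs_nonneg (x j)) (Finset.mem_univ i)
    have h2 : 0 ≤ ∑ i, (A.mulVec x i - y i) ^ 2 :=
      Finset.sum_nonneg fun i _ => sq_nonneg _
    unfold lassoObj
    nlinarith [mul_le_mul_of_nonneg_left h1 hlam.le]
  have htend : Filter.Tendsto (lassoObj lam y A) (Filter.cocompact _) Filter.atTop :=
    Filter.tendsto_atTop_mono hco
      (Filter.Tendsto.const_mul_atTop hlam tendsto_norm_cocompact_atTop)
  exact (lasso_continuous lam y A).exists_forall_le htend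

lemma zero_sol {m N : ℕ} {lam : ℝ} (hlam : 0 ≤ lam) :
    (0 : Fin N → ℝ) ∈ lassoSol lam (0 : Fin m → ℝ) 0 := by
  intro z
  unfold lassoObj
  simp only [Matrix.mulVec_zero, Matrix.zero_mulVec, Pi.zero_apply, sub_zero, abs_zero,
    Finset.sum_const_zero, mul_zero, add_zero]
  have : (0:ℝ) ^ 2 = 0 := by norm_num
  simp only [this, Finset.sum_const_zero, zero_add]
  positivity

lemma degen_sol {N : ℕ} {lam : ℝ} (hlam : 0 < lam) (y : Fin 0 → ℝ)
    (A : Matrix (Fin 0) (Fin N) ℝ) {x : Fin N → ℝ} (hx : x ∈ lassoSol lam y A) : x = 0 := by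
  have h := hx 0
  unfold lassoObj at h
  simp only [Finset.univ_eq_empty, Finset.sum_empty, Pi.zero_apply, abs_zero,
    Finset.sum_const_zero, mul_zero, add_zero, zero_add] at h
  have hs : ∑ j, |x j| ≤ 0 := by nlinarith
  funext j
  have := Finset.sum_nonneg (fun j (_ : j ∈ Finset.univ) => abs_nonneg (x j))
  have hz : ∑ j, |x j| = 0 := le_antisymm hs this
  have := (Finset.sum_eq_zero_iff_of_nonneg (fun j _ => abs_nonneg (x j))).1 hz j (Finset.mem_univ j)
  simpa [abs_eq_zero] using this

lemma spike_obj {m N : ℕ} (lam : ℝ) (v : Fin (N+1) → ℝ) :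
    lassoObj lam (fun i : Fin (m+1) => if i = 0 then lam else 0)
      (Matrix.of fun (i : Fin (m+1)) (j : Fin (N+1)) => if i = 0 ∧ j = 0 then (1:ℝ) else 0) v
      = (v 0 - lam) ^ 2 + lam * ∑ j, |v j| := by
  unfold lassoObj
  congr 1
  have hmul : ∀ i : Fin (m+1),
      (Matrix.of fun (i : Fin (m+1)) (j : Fin (N+1)) => if i = 0 ∧ j = 0 then (1:ℝ) else 0).mulVec v i
      = if i = 0 then v 0 else 0 := by
    intro i
    simp only [Matrix.mulVec, dotProduct, Matrix.of_apply]
    by_cases hi : i = 0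
    · simp [hi, ite_mul, Finset.sum_ite_eq']
    · simp [hi]
  calc ∑ i, ((Matrix.of fun (i : Fin (m+1)) (j : Fin (N+1)) => if i = 0 ∧ j = 0 then (1:ℝ) else 0).mulVec v i - (if i = 0 then lam else 0)) ^ 2
      = ∑ i : Fin (m+1), (if i = 0 then (v 0 - lam)^2 else 0) := by
        apply Finset.sum_congr rfl
        intro i _
        rw [hmul i]
        by_cases hi : i = 0 <;> simp [hi]
    _ = (v 0 - lam)^2 := by simp [Finset.sum_ite_eq']

lemma spike_sol {m N : ℕ} {lam : ℝ} (hlam : 0 < lam) :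
    (fun j : Fin (N+1) => if j = 0 then lam/2 else 0) ∈
      lassoSol lam (fun i : Fin (m+1) => if i = 0 then lam else 0)
        (Matrix.of fun (i : Fin (m+1)) (j : Fin (N+1)) => if i = 0 ∧ j = 0 then (1:ℝ) else 0) := by
  intro z
  rw [spike_obj, spike_obj]
  have h1 : ∑ j : Fin (N+1), |if j = 0 then lam/2 else 0| = lam/2 := by
    have : ∀ j : Fin (N+1), |if j = 0 then lam/2 else 0| = if j = 0 then lam/2 else 0 := by
      intro j
      by_cases hj : j = 0
      · simp only [hj, if_pos rfl]
        exact abs_of_nonneg (by positivity)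
      · simp [hj]
    simp only [this]
    simp [Finset.sum_ite_eq']
  rw [h1]
  simp only [if_pos rfl, if_true, ite_true]
  have h2 : |z 0| ≤ ∑ j, |z j| :=
    Finset.single_le_sum (fun j _ => abs_nonneg (z j)) (Finset.mem_univ 0)
  have h3 : z 0 ≤ |z 0| := le_abs_self _
  nlinarith [sq_nonneg (z 0 - lam/2), mul_le_mul_of_nonneg_left h2 hlam.le,
    mul_le_mul_of_nonneg_left h3 hlam.le, abs_nonneg (z 0)]

lemma sset_empty_N0 {m : ℕ} (lam : ℝ) (y : Fin m → ℝ)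
    (A : Matrix (Fin m) (Fin 0) ℝ) : sset lam y A = ∅ := by
  ext δ
  simp only [Set.mem_empty_iff_false, iff_false]
  rintro ⟨_, yt, At, x, xt, _, _, _, _, hne⟩
  exact hne (congrArg Function.support (funext fun j => (Nat.not_lt_zero _ j.isLt).elim))

lemma sset_empty_m0 {N : ℕ} {lam : ℝ} (hlam : 0 < lam) (y : Fin 0 → ℝ)
    (A : Matrix (Fin 0) (Fin N) ℝ) : sset lam y A = ∅ := by
  ext δ
  simp only [Set.mem_empty_iff_false, iff_false]
  rintro ⟨_, yt, At, x, xt, hx, hxt, _, _, hne⟩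
  rw [degen_sol hlam y A hx, degen_sol hlam yt At hxt] at hne
  exact hne rfl

lemma sset_nonempty {m N : ℕ} {lam : ℝ} (hlam : 0 < lam) (b : Fin (m+1) → ℝ)
    (U : Matrix (Fin (m+1)) (Fin (N+1)) ℝ) : (sset lam b U).Nonempty := by
  obtain ⟨xb, hxb⟩ := exists_lasso_sol hlam b U
  by_cases h : Function.support xb = ∅
  · set yt := fun i : Fin (m+1) => if i = 0 then lam else 0 with hyt
    set At := Matrix.of fun (i : Fin (m+1)) (j : Fin (N+1)) =>
      if i = 0 ∧ j = 0 then (1:ℝ) else 0 with hAt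
    set xt := fun j : Fin (N+1) => if j = 0 then lam/2 else 0 with hxt
    set δ := (⨆ i, |yt i - b i|) ⊔ ((⨆ i, ⨆ j, |U i j - At i j|) ⊔ 0) with hδ
    have hδ0 : (0:ℝ) ≤ δ := le_trans le_sup_right le_sup_right
    refine ⟨δ, hδ0, yt, At, xb, xt, hxb, spike_sol hlam, ?_, ?_, ?_⟩
    · exact fun i => le_trans (le_iSup_fin (fun i => |yt i - b i|) i) le_sup_left
    · intro i j
      exact le_trans (le_trans (le_iSup_fin (fun j' => |U i j' - At i j'|) j)
        (le_iSup_fin (fun i' => ⨆ j', |U i' j' - At i' j'|) i))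
        (le_trans le_sup_left le_sup_right)
    · rw [h]
      intro hcon
      have h0 : (0 : Fin (N+1)) ∈ Function.support xt := by
        simp only [Function.mem_support, hxt, if_pos rfl]
        exact ne_of_gt (half_pos hlam)
      rw [← hcon] at h0
      exact h0
  · set δ := (⨆ i, |(0:ℝ) - b i|) ⊔ ((⨆ i, ⨆ j, |U i j - (0:ℝ)|) ⊔ 0) with hδ
    have hδ0 : (0:ℝ) ≤ δ := le_trans le_sup_right le_sup_right
    refine ⟨δ, hδ0, 0, 0, xb, 0, hxb, zero_sol hlam.le, ?_, ?_, ?_⟩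
    · exact fun i => le_trans (le_iSup_fin (fun i => |(0:ℝ) - b i|) i) le_sup_left
    · intro i j
      exact le_trans (le_trans (le_iSup_fin (fun j' => |U i j' - (0:ℝ)|) j)
        (le_iSup_fin (fun i' => ⨆ j', |U i' j' - (0:ℝ)|) i))
        (le_trans le_sup_left le_sup_right)
    · intro hcon
      apply h
      rw [hcon]
      ext j
      simp

/-- The stability support is 1-Lipschitz for the max-distance on inputs; moreover
inside the stability radius all minimisers have the same support. -/
theorem stsp_lipschitz {m N : ℕ} (lam : ℝ) (hlam : 0 < lam)
    (y b : Fin m → ℝ) (A U : Matrix (Fin m) (Fin N) ℝ) :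
    stsp lam b U ≥ stsp lam y A - max (⨆ i, |y i - b i|) (⨆ i, ⨆ j, |A i j - U i j|) ∧
    (max (⨆ i, |y i - b i|) (⨆ i, ⨆ j, |A i j - U i j|) < stsp lam y A →
      ∀ x ∈ lassoSol lam b U, ∀ x' ∈ lassoSol lam y A,
        Function.support x = Function.support x') := by
  set D := max (⨆ i, |y i - b i|) (⨆ i, ⨆ j, |A i j - U i j|) with hD
  have hD0 : 0 ≤ D :=
    le_trans (Real.iSup_nonneg fun i => abs_nonneg _) (le_max_left _ _)
  have hyb : ∀ i, |y i - b i| ≤ D :=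
    fun i => le_trans (le_iSup_fin (fun i => |y i - b i|) i) (le_max_left _ _)
  have hAU : ∀ i j, |A i j - U i j| ≤ D := fun i j =>
    le_trans (le_trans (le_iSup_fin (fun j' => |A i j' - U i j'|) j)
      (le_iSup_fin (fun i' => ⨆ j', |A i' j' - U i' j'|) i)) (le_max_right _ _)
  constructor
  · -- Lipschitz bound
    match m, y, b, A, U, hyb, hAU with
    | 0, y, b, A, U, hyb, hAU =>
      rw [stsp_eq_sInf lam y A, sset_empty_m0 hlam y A, Real.sInf_empty]
      have := stsp_nonneg lam b U
      linarith
    | (m'+1), y, b, A, U, hyb, hAU =>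
      match N, A, U, hAU with
      | 0, A, U, hAU =>
        rw [stsp_eq_sInf lam y A, sset_empty_N0 lam y A, Real.sInf_empty]
        have := stsp_nonneg lam b U
        linarith
      | (N'+1), A, U, hAU =>
        obtain ⟨x₀, hx₀⟩ := exists_lasso_sol hlam y A
        have key : ∀ δ ∈ sset lam b U, stsp lam y A ≤ δ + D := by
          rintro δ ⟨hδ0, yt, At, xp, xtp, hxp, hxtp, hy1, hA1, hnep⟩
          by_cases h1 : Function.support x₀ = Function.support xp
          · refine csInf_le (sset_bddBelow lam y A) ⟨by linarith, yt, At, x₀, xtp, hx₀, hxtp,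
              ?_, ?_, h1 ▸ hnep⟩
            · intro i
              have := abs_sub_le (yt i) (b i) (y i)
              have hb : |b i - y i| = |y i - b i| := abs_sub_comm _ _
              have := hyb i
              have := hy1 i
              linarith
            · intro i j
              have := abs_sub_le (A i j) (U i j) (At i j)
              have := hAU i j
              have := hA1 i j
              linarith
          · refine le_trans (csInf_le (sset_bddBelow lam y A)
              ⟨hD0, b, U, x₀, xp, hx₀, hxp, ?_, hAU, h1⟩) (by linarith)
            intro i
            rw [abs_sub_comm]
            exact hyb i
        have hne := sset_nonempty hlam b U
        have hle : stsp lam y A - D ≤ sInf (sset lam b U) :=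
          le_csInf hne (fun δ hδ => by linarith [key δ hδ])
        rw [stsp_eq_sInf]
        exact hle
  · -- support stability inside the radius
    intro hlt x hx x' hx'
    by_contra hne
    have hmem : D ∈ sset lam y A :=
      ⟨hD0, b, U, x', x, hx', hx,
        fun i => by rw [abs_sub_comm]; exact hyb i, hAU, fun h => hne h.symm⟩
    have : stsp lam y A ≤ D := csInf_le (sset_bddBelow lam y A) hmem
    linarith
end
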